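/- Let C4 be the cycle graph on vertices {0,1,2,3} with edges {0,1}, {1,2}, {2,3}, {3,0}, and let d be its shortest-path distance. For p, q ∈ [0,1] define the probability distribution f(p,q) on {0,1,2,3} by f(p,q)(0) = pq, f(p,q)(1) = q(1−p), f(p,q)(2) = (1−p)(1−q), f(p,q)(3) = p(1−q). Then for all p0, q0, p1, q1 ∈ [0,1], W1(f(p0,q0), f(p1,q1)) = |p1 − p0| + |q1 − q0|. -/

import Mathlib

/-!
Sending `x` to `(x ∈ {0, 3}, x ∈ {0, 1})` identifies `C4` with the box product of two copies of
`K₂` on `Bool × Bool`. Under this identification the graph distance is the sum of the Hamming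
distances of the two coordinates, and `f(p, q)` is the product of the Bernoulli distributions with
parameters `p` and `q`. Integrating the two coordinate indicators against any coupling shows that
its cost is at least `|p1 - p0| + |q1 - q0|`, and the product of the optimal couplings of the two
Bernoulli factors attains this bound.
-/

open scoped BigOperators
open Set

def C4 : SimpleGraph (ZMod 4) := SimpleGraph.fromRel (fun x y => y = x + 1)

noncomputable def fSquare (p q : ℝ) (x : ZMod 4) : ℝ :=
  if x = 0 then p * q
  else if x = 1 then q * (1 - p)
  else if x = 2 then (1 - p) * (1 - q)
  else p * (1 - q)

section Coupling

open Finset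

variable {α β γ δ : Type*} [Fintype α] [Fintype β] [Fintype γ] [Fintype δ]

def IsCoupling (μ : α → ℝ) (ν : β → ℝ) (π : α → β → ℝ) : Prop :=
  (∀ x y, 0 ≤ π x y) ∧ (∀ x, ∑ y, π x y = μ x) ∧ (∀ y, ∑ x, π x y = ν y)

namespace IsCoupling

variable {μ : α → ℝ} {ν : β → ℝ} {π : α → β → ℝ}

lemma abs_sum_mul_sub_sum_mul_le {μ ν : α → ℝ} {π : α → α → ℝ} (h : IsCoupling μ ν π)
    (g : α → ℝ) : |∑ x, g x * μ x - ∑ y, g y * ν y| ≤ ∑ x, ∑ y, |g x - g y| * π x y := by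
  have hsum : ∑ x, g x * μ x - ∑ y, g y * ν y = ∑ x, ∑ y, (g x - g y) * π x y := by
    simp_rw [← h.2.1, ← h.2.2, mul_sum, sub_mul, sum_sub_distrib]
    rw [sum_comm (f := fun y x => g y * π x y)]
  calc |∑ x, g x * μ x - ∑ y, g y * ν y|
      ≤ ∑ x, ∑ y, |(g x - g y) * π x y| := hsum ▸ (abs_sum_le_sum_abs _ _).trans
        (sum_le_sum fun x _ => abs_sum_le_sum_abs _ _)
    _ = ∑ x, ∑ y, |g x - g y| * π x y := by simp_rw [abs_mul, abs_of_nonneg (h.1 _ _)]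

lemma comp_equiv (h : IsCoupling μ ν π) (e : γ ≃ α) (e' : δ ≃ β) :
    IsCoupling (μ ∘ e) (ν ∘ e') (fun x y => π (e x) (e' y)) :=
  ⟨fun _ _ => h.1 _ _,
    fun x => (e'.sum_comp (π (e x))).trans (h.2.1 (e x)),
    fun y => (e.sum_comp (π · (e' y))).trans (h.2.2 (e' y))⟩

lemma prod {μ' : γ → ℝ} {ν' : δ → ℝ} {κ : γ → δ → ℝ} (h : IsCoupling μ ν π)
    (h' : IsCoupling μ' ν' κ) :
    IsCoupling (fun x : α × γ => μ x.1 * μ' x.2) (fun y : β × δ => ν y.1 * ν' y.2)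
      (fun x y => π x.1 y.1 * κ x.2 y.2) :=
  ⟨fun _ _ => mul_nonneg (h.1 _ _) (h'.1 _ _),
    fun x => by simp only [Fintype.sum_prod_type, ← sum_mul_sum, h.2.1, h'.2.1],
    fun y => by simp only [Fintype.sum_prod_type, ← sum_mul_sum, h.2.2, h'.2.2]⟩

lemma sum_sum_eq (h : IsCoupling μ ν π) : ∑ x, ∑ y, π x y = ∑ x, μ x :=
  sum_congr rfl fun x _ => h.2.1 x

end IsCoupling

lemma sum_sum_add_mul_mul (c : α → β → ℝ) (c' : γ → δ → ℝ) (π : α → β → ℝ)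
    (κ : γ → δ → ℝ) :
    ∑ x : α × γ, ∑ y : β × δ, (c x.1 y.1 + c' x.2 y.2) * (π x.1 y.1 * κ x.2 y.2)
      = (∑ x, ∑ y, c x y * π x y) * (∑ x, ∑ y, κ x y)
        + (∑ x, ∑ y, π x y) * (∑ x, ∑ y, c' x y * κ x y) := by
  simp only [Fintype.sum_prod_type, sum_mul_sum, add_mul, sum_add_distrib]
  congr! 5 <;> ring

end Coupling

section Bernoulli

variable {u v : ℝ}

def bernoulliDensity (u : ℝ) (b : Bool) : ℝ := if b then u else 1 - u

def bernoulliCoupling (u v : ℝ) (s t : Bool) : ℝ :=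
  if s then (if t then min u v else u - min u v) else (if t then v - min u v else 1 - max u v)

lemma sum_bernoulliDensity (u : ℝ) : ∑ s, bernoulliDensity u s = 1 := by
  simp [bernoulliDensity]

lemma isCoupling_bernoulliCoupling (hu : u ∈ Set.Icc 0 1) (hv : v ∈ Set.Icc 0 1) :
    IsCoupling (bernoulliDensity u) (bernoulliDensity v) (bernoulliCoupling u v) := by
  refine ⟨?_, ?_, ?_⟩
  · rintro (_ | _) (_ | _) <;> simp only [bernoulliCoupling, Bool.false_eq_true, if_true, if_false]
    · exact sub_nonneg.2 (max_le hu.2 hv.2)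
    · exact sub_nonneg.2 (min_le_right u v)
    · exact sub_nonneg.2 (min_le_left u v)
    · exact le_min hu.1 hv.1
  all_goals rintro (_ | _) <;> simp [bernoulliCoupling, bernoulliDensity]
  all_goals linarith [min_add_max u v]

lemma sum_sum_abs_toNat_sub_mul_bernoulliCoupling (u v : ℝ) :
    ∑ s : Bool, ∑ t : Bool, |(s.toNat : ℝ) - t.toNat| * bernoulliCoupling u v s t = |u - v| := by
  have := max_sub_min_eq_abs' u v
  simp [bernoulliCoupling]
  linarith [min_add_max u v]

end Bernoulli

namespace SimpleGraph

variable {V W : Type*} {G : SimpleGraph V} {H : SimpleGraph W}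

lemma Hom.edist_map_le (f : G →g H) (u v : V) : H.edist (f u) (f v) ≤ G.edist u v := by
  rcases eq_or_ne (G.edist u v) ⊤ with h | h
  · simp [h]
  · obtain ⟨w, hw⟩ := exists_walk_of_edist_ne_top h
    rw [← hw, ← w.length_map f]
    exact edist_le _

lemma Iso.edist_eq (e : G ≃g H) (u v : V) : H.edist (e u) (e v) = G.edist u v :=
  le_antisymm (e.toHom.edist_map_le u v) <| by
    simpa using e.symm.toHom.edist_map_le (e u) (e v)

lemma Iso.dist_eq (e : G ≃g H) (u v : V) : H.dist (e u) (e v) = G.dist u v := by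
  rw [dist, dist, e.edist_eq]

end SimpleGraph

def squareEquiv : ZMod 4 ≃ Bool × Bool where
  toFun x := (decide (x = 0 ∨ x = 3), decide (x = 0 ∨ x = 1))
  invFun z := if z.1 then (if z.2 then 0 else 3) else (if z.2 then 1 else 2)
  left_inv := by decide
  right_inv := by decide

def c4IsoSquare : C4 ≃g (⊤ : SimpleGraph Bool) □ (⊤ : SimpleGraph Bool) where
  toEquiv := squareEquiv
  map_rel_iff' := by
    intro x y
    simp only [SimpleGraph.boxProd_adj, SimpleGraph.top_adj, C4, SimpleGraph.fromRel_adj]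
    revert x y
    decide

lemma dist_boolSquare (z w : Bool × Bool) :
    (((⊤ : SimpleGraph Bool) □ (⊤ : SimpleGraph Bool)).dist z w : ℝ)
      = |(z.1.toNat : ℝ) - w.1.toNat| + |(z.2.toNat : ℝ) - w.2.toNat| := by
  rcases z with ⟨_ | _, _ | _⟩ <;> rcases w with ⟨_ | _, _ | _⟩ <;>
    simp [SimpleGraph.dist, SimpleGraph.edist_boxProd, SimpleGraph.edist_top, one_add_one_eq_two]

lemma C4_dist_eq (x y : ZMod 4) :
    (C4.dist x y : ℝ) = |((squareEquiv x).1.toNat : ℝ) - (squareEquiv y).1.toNat|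
      + |((squareEquiv x).2.toNat : ℝ) - (squareEquiv y).2.toNat| := by
  rw [← c4IsoSquare.dist_eq]
  exact dist_boolSquare _ _

section Square

open Finset

variable {p0 q0 p1 q1 : ℝ}

lemma fSquare_eq_comp (p q : ℝ) :
    fSquare p q = (fun z : Bool × Bool => bernoulliDensity p z.1 * bernoulliDensity q z.2)
      ∘ squareEquiv := by
  funext x
  obtain rfl | rfl | rfl | rfl : x = 0 ∨ x = 1 ∨ x = 2 ∨ x = 3 := by revert x; decide
  all_goals simp +decide [fSquare, squareEquiv, bernoulliDensity, mul_comm]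

lemma sum_toNat_fst_mul_fSquare (p q : ℝ) :
    ∑ x, ((squareEquiv x).1.toNat : ℝ) * fSquare p q x = p := by
  rw [fSquare_eq_comp]
  exact (squareEquiv.sum_comp fun z => (z.1.toNat : ℝ) *
    (bernoulliDensity p z.1 * bernoulliDensity q z.2)).trans
      (by simp [Fintype.sum_prod_type, bernoulliDensity]; ring)

lemma sum_toNat_snd_mul_fSquare (p q : ℝ) :
    ∑ x, ((squareEquiv x).2.toNat : ℝ) * fSquare p q x = q := by
  rw [fSquare_eq_comp]
  exact (squareEquiv.sum_comp fun z => (z.2.toNat : ℝ) *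
    (bernoulliDensity p z.1 * bernoulliDensity q z.2)).trans
      (by simp [Fintype.sum_prod_type, bernoulliDensity]; ring)

def squareCoupling (p0 q0 p1 q1 : ℝ) (x y : ZMod 4) : ℝ :=
  bernoulliCoupling p0 p1 (squareEquiv x).1 (squareEquiv y).1 *
    bernoulliCoupling q0 q1 (squareEquiv x).2 (squareEquiv y).2

lemma isCoupling_squareCoupling (hp0 : p0 ∈ Set.Icc 0 1) (hq0 : q0 ∈ Set.Icc 0 1)
    (hp1 : p1 ∈ Set.Icc 0 1) (hq1 : q1 ∈ Set.Icc 0 1) :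
    IsCoupling (fSquare p0 q0) (fSquare p1 q1) (squareCoupling p0 q0 p1 q1) := by
  rw [fSquare_eq_comp, fSquare_eq_comp]
  exact ((isCoupling_bernoulliCoupling hp0 hp1).prod
    (isCoupling_bernoulliCoupling hq0 hq1)).comp_equiv squareEquiv squareEquiv

lemma sum_sum_dist_mul_squareCoupling (hp0 : p0 ∈ Set.Icc 0 1) (hq0 : q0 ∈ Set.Icc 0 1)
    (hp1 : p1 ∈ Set.Icc 0 1) (hq1 : q1 ∈ Set.Icc 0 1) :
    ∑ x, ∑ y, (C4.dist x y : ℝ) * squareCoupling p0 q0 p1 q1 x y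
      = |p1 - p0| + |q1 - q0| := by
  have hprod := sum_sum_add_mul_mul (fun s t : Bool => |(s.toNat : ℝ) - t.toNat|)
    (fun s t : Bool => |(s.toNat : ℝ) - t.toNat|) (bernoulliCoupling p0 p1)
    (bernoulliCoupling q0 q1)
  rw [sum_sum_abs_toNat_sub_mul_bernoulliCoupling, sum_sum_abs_toNat_sub_mul_bernoulliCoupling,
    (isCoupling_bernoulliCoupling hp0 hp1).sum_sum_eq,
    (isCoupling_bernoulliCoupling hq0 hq1).sum_sum_eq, sum_bernoulliDensity,
    sum_bernoulliDensity, mul_one, one_mul, abs_sub_comm p0, abs_sub_comm q0] at hprod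
  rw [← hprod, ← squareEquiv.sum_comp]
  refine sum_congr rfl fun x _ => ?_
  rw [← squareEquiv.sum_comp]
  simp only [C4_dist_eq, squareCoupling]

lemma IsCoupling.le_sum_sum_dist_mul {π : ZMod 4 → ZMod 4 → ℝ}
    (h : IsCoupling (fSquare p0 q0) (fSquare p1 q1) π) :
    |p1 - p0| + |q1 - q0| ≤ ∑ x, ∑ y, (C4.dist x y : ℝ) * π x y := by
  have hp := h.abs_sum_mul_sub_sum_mul_le fun x => ((squareEquiv x).1.toNat : ℝ)
  have hq := h.abs_sum_mul_sub_sum_mul_le fun x => ((squareEquiv x).2.toNat : ℝ)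
  rw [sum_toNat_fst_mul_fSquare, sum_toNat_fst_mul_fSquare, abs_sub_comm] at hp
  rw [sum_toNat_snd_mul_fSquare, sum_toNat_snd_mul_fSquare, abs_sub_comm] at hq
  simp_rw [C4_dist_eq, add_mul, sum_add_distrib]
  exact add_le_add hp hq

end Square

/-- on the 4-cycle, `W1(f(p0,q0), f(p1,q1)) = |p1−p0| + |q1−q0|`. -/
theorem statement19 (p0 q0 p1 q1 : ℝ)
    (hp0 : p0 ∈ Icc (0:ℝ) 1) (hq0 : q0 ∈ Icc (0:ℝ) 1)
    (hp1 : p1 ∈ Icc (0:ℝ) 1) (hq1 : q1 ∈ Icc (0:ℝ) 1) :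
    sInf {c : ℝ | ∃ π : ZMod 4 → ZMod 4 → ℝ,
      (∀ x y, 0 ≤ π x y) ∧
      (∀ x, ∑ y, π x y = fSquare p0 q0 x) ∧
      (∀ y, ∑ x, π x y = fSquare p1 q1 y) ∧
      c = ∑ x, ∑ y, (C4.dist x y : ℝ) * π x y} = |p1 - p0| + |q1 - q0| := by
  obtain ⟨hnonneg, hfst, hsnd⟩ := isCoupling_squareCoupling hp0 hq0 hp1 hq1
  refine IsLeast.csInf_eq ⟨⟨squareCoupling p0 q0 p1 q1, hnonneg, hfst, hsnd,
    (sum_sum_dist_mul_squareCoupling hp0 hq0 hp1 hq1).symm⟩, ?_⟩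
  rintro c ⟨π, hπ, hμ, hν, rfl⟩
  exact IsCoupling.le_sum_sum_dist_mul ⟨hπ, hμ, hν⟩
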